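/- Let (X_J)_{J∈𝒥} be a real-valued exchangeable array. Let k_1 > k_2 > … > k_l ∈ {1,…,k}, let h_1,…,h_l be positive integers, and set L = Σ_{j=1}^l h_j k_j and p = Σ_{j=1}^l h_j. Let {J_m}_{m=1}^p be a partition of the set {1,…,L} which, for each j, contains exactly h_j sets of size k_j. Assume E[|X_{{1,…,k_j}}|^p] < ∞ for all j. Then E[∏_{j=1}^l (T^{(k_j)})^{h_j}] = E[∏_{m=1}^p X_{J_m}]. -/

import Mathlib

/-!
Write `s m = |J_m|`. Multiplying out, `∏_j (T_N^{(k_j)})^{h_j} = ∏_m T_N^{(s m)}` is the average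
of `∏_m X_{K_m}` over all tuples `(K_m)` of subsets of `{0, …, N-1}` with `|K_m| = s m`.
By exchangeability, every tuple of pairwise disjoint sets has `E ∏_m X_{K_m} = E ∏_m X_{J_m}`;
the overlapping tuples are a fraction `O(1/N)` of all tuples, and each of them contributes a
bounded amount, because AM-GM gives `|∏_m X_{K_m}| ≤ avg_m |X_{K_m}|^p` and each `|X_K|^p` is
distributed as one of the integrable `|X_{{1,…,k_j}}|^p`. Hence `E ∏_m T_N^{(s m)}` tends to
`E ∏_m X_{J_m}`. The same AM-GM bound dominates `∏_m T_N^{(s m)}` by an average of such copies,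
so these products are uniformly integrable, and Vitali's theorem identifies the limit of their
expectations with `E ∏_j (T^{(k_j)})^{h_j}`.
-/

open MeasureTheory Filter Topology

noncomputable section

/-- The index set `𝒥`: nonempty subsets of `ℕ` of cardinality at most `k`. -/
abbrev Idx (k : ℕ) := {J : Finset ℕ // J.Nonempty ∧ J.card ≤ k}

/-- Action of a permutation of `ℕ` on the index set: `J ↦ τ(J)`. -/
def permIdx (k : ℕ) (τ : Equiv.Perm ℕ) (J : Idx k) : Idx k :=
  ⟨J.1.image τ, J.2.1.image τ, by
    rw [Finset.card_image_of_injective _ τ.injective]; exact J.2.2⟩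

/-- Action of a permutation on the canonical space `V ^ 𝒥`. -/
def permAct (k : ℕ) (V : Type*) (τ : Equiv.Perm ℕ) (ω : Idx k → V) : Idx k → V :=
  fun J => ω (permIdx k τ J)

/-- Exchangeability of the canonical array. -/
def IsExchangeable (k : ℕ) {V : Type*} [MeasurableSpace V] (P : Measure (Idx k → V)) : Prop :=
  ∀ τ : Equiv.Perm ℕ, {x | τ x ≠ x}.Finite → Measure.map (permAct k V τ) P = P

/-- The normalized `U`-statistic `T_N^{(d)} = binom(N,d)⁻¹ Σ_{J ⊆ {0,…,N-1}, |J| = d} X_J`. -/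
def TNstat (k d : ℕ) (hd : 0 < d) (hdk : d ≤ k) (N : ℕ) (ω : Idx k → ℝ) : ℝ :=
  ((N.choose d : ℝ))⁻¹ *
    ∑ J ∈ (Finset.powersetCard d (Finset.range N)).attach,
      ω ⟨J.1, by
        have h := Finset.mem_powersetCard.mp J.2
        exact ⟨Finset.card_pos.mp (by rw [h.2]; exact hd), by rw [h.2]; exact hdk⟩⟩

/-- The index `{0, …, d-1}` (the canonical set of cardinality `d`). -/
def idxRange (k d : ℕ) (hd : 0 < d) (hdk : d ≤ k) : Idx k :=
  ⟨Finset.range d, Finset.nonempty_range_iff.mpr hd.ne', by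
    rw [Finset.card_range]; exact hdk⟩

open Finset Function
open scoped BigOperators

theorem prod_expect_eq_expect_piFinset {ι κ K : Type*} [Fintype ι] [DecidableEq ι] [Semifield K]
    [CharZero K] (t : ι → Finset κ) (f : ι → κ → K) :
    ∏ i, 𝔼 x ∈ t i, f i x = 𝔼 x ∈ Fintype.piFinset t, ∏ i, f i (x i) := by
  simp only [expect_eq_sum_div_card, Fintype.card_piFinset, Nat.cast_prod, prod_div_distrib,
    prod_univ_sum]

theorem prod_abs_le_expect_pow {ι : Type*} [Fintype ι] [Nonempty ι] (x : ι → ℝ) :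
    ∏ i, |x i| ≤ 𝔼 i, |x i| ^ Fintype.card ι := by
  set n := Fintype.card ι
  have hn : (n : ℝ) ≠ 0 := by simp [n]
  calc ∏ i, |x i| = ∏ i, (|x i| ^ n) ^ (n : ℝ)⁻¹ := by
        refine prod_congr rfl fun i _ => ?_
        rw [← Real.rpow_natCast, ← Real.rpow_mul (abs_nonneg _), mul_inv_cancel₀ hn,
          Real.rpow_one]
    _ ≤ ∑ i, (n : ℝ)⁻¹ * |x i| ^ n :=
        Real.geom_mean_le_arith_mean_weighted _ _ _ (fun _ _ => by positivity)
          (by simp [n, hn]) (fun _ _ => by positivity)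
    _ = 𝔼 i, |x i| ^ n := by rw [Fintype.expect_eq_sum_div_card, ← mul_sum, inv_mul_eq_div]

theorem max_abs_sub_le_expect {κ : Type*} {t : Finset κ} {Z : κ → ℝ} {y M : ℝ} (hM : 0 ≤ M)
    (hy : |y| ≤ 𝔼 i ∈ t, Z i) : max (|y| - M) 0 ≤ 𝔼 i ∈ t, max (Z i - M) 0 := by
  rcases t.eq_empty_or_nonempty with rfl | ht
  · simp only [expect_empty] at hy ⊢
    exact max_le (by linarith) le_rfl
  refine max_le ?_ (expect_nonneg fun i _ => le_max_right _ _)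
  calc |y| - M ≤ 𝔼 i ∈ t, (Z i - M) := by rw [expect_sub_distrib, expect_const ht]; linarith
    _ ≤ _ := expect_le_expect fun i _ => le_max_left _ _

theorem abs_expect_sub_le {κ : Type*} {t : Finset κ} (ht : t.Nonempty) {F : κ → ℝ} {R B : ℝ}
    (p : κ → Prop) [DecidablePred p] (hp : ∀ K ∈ t, p K → F K = R)
    (hB : ∀ K ∈ t, |F K - R| ≤ B) :
    |𝔼 K ∈ t, F K - R| ≤ #{K ∈ t | ¬ p K} / #t * B := by
  have hsum : ∑ K ∈ t with ¬ p K, (F K - R) = ∑ K ∈ t, (F K - R) :=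
    sum_filter_of_ne fun K hK hne hpK => hne (by rw [hp K hK hpK, sub_self])
  rw [← expect_const ht R, ← expect_sub_distrib, expect_eq_sum_div_card, ← hsum, abs_div,
    Nat.abs_cast, div_mul_eq_mul_div]
  gcongr
  refine (abs_sum_le_sum_abs _ _).trans ?_
  simpa using sum_le_card_nsmul _ _ B fun K hK => hB K (mem_filter.1 hK).1

theorem exists_eq_of_sum_card_filter_eq {α ι β : Type*} [Fintype α] [Fintype ι] [DecidableEq β]
    {f : α → β} {g : ι → β} (hg : Injective g)
    (h : ∑ j, #{a | f a = g j} = Fintype.card α) (a : α) : ∃ j, f a = g j := by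
  classical
  have hdisj : ((univ : Finset ι) : Set ι).PairwiseDisjoint fun j => ({a | f a = g j} : Finset α) :=
    fun i _ j _ hij => disjoint_filter.2 fun a _ hi hj => hij (hg (hi.symm.trans hj))
  obtain ⟨j, -, hj⟩ := mem_biUnion.1 ((eq_univ_of_card _ ((card_biUnion hdisj).trans h)).symm ▸
    mem_univ a)
  exact ⟨j, (mem_filter.1 hj).2⟩

theorem prod_pow_card_filter_eq_prod_comp {α ι M : Type*} [Fintype α] [Fintype ι] [DecidableEq ι]
    [CommMonoid M] (c : α → ι) (x : ι → M) : ∏ j, x j ^ #{a | c a = j} = ∏ a, x (c a) := by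
  rw [← prod_fiberwise univ c fun a => x (c a)]
  refine prod_congr rfl fun j _ => ?_
  rw [prod_congr rfl fun a ha => by rw [(mem_filter.1 ha).2], prod_const]

theorem card_biUnion_lt_sum_card {ι α : Type*} [Fintype ι] [DecidableEq α] {K : ι → Finset α}
    (hK : ¬ Pairwise (Disjoint on K)) : #(univ.biUnion K) < ∑ i, #(K i) := by
  classical
  obtain ⟨i, j, hij, hdisj⟩ : ∃ i j, i ≠ j ∧ ¬ Disjoint (K i) (K j) := by
    simpa [Pairwise] using hK
  obtain ⟨x, hxi, hxj⟩ := not_disjoint_iff.1 hdisj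
  have hunion : univ.biUnion K = K j ∪ (univ.erase j).biUnion K := by
    rw [← biUnion_insert, insert_erase (mem_univ j)]
  have hinter : (K j ∩ (univ.erase j).biUnion K).Nonempty :=
    ⟨x, mem_inter.2 ⟨hxj, mem_biUnion.2 ⟨i, mem_erase.2 ⟨hij, mem_univ i⟩, hxi⟩⟩⟩
  have := card_union_add_card_inter (K j) ((univ.erase j).biUnion K)
  have := card_biUnion_le (s := univ.erase j) (t := K)
  have := hinter.card_pos
  rw [hunion, ← add_sum_erase _ _ (mem_univ j)]
  omega

section SubsetTuples

variable {ι : Type*} [Fintype ι] (s : ι → ℕ)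

open Asymptotics in
theorem tendsto_choose_div_prod_choose (hs : 0 < ∑ i, s i) :
    Tendsto (fun N : ℕ => (N.choose (∑ i, s i - 1) : ℝ) / ∏ i, (N.choose (s i) : ℝ)) atTop
      (𝓝 0) := by
  refine ((isTheta_choose _).div
    (IsTheta.finsetProd fun i _ => isTheta_choose (s i))).isBigO.trans_tendsto ?_
  obtain ⟨L, hL⟩ : ∃ L, ∑ i, s i = L + 1 := Nat.exists_eq_succ_of_ne_zero hs.ne'
  simp only [prod_pow_eq_pow_sum, hL, Nat.add_sub_cancel, pow_succ]
  refine (tendsto_inv_atTop_nhds_zero_nat (𝕜 := ℝ)).congr'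
    ((eventually_ge_atTop 1).mono fun N hN => ?_)
  have : (N : ℝ) ^ L ≠ 0 := by positivity
  field_simp

variable [DecidableEq ι]

def subsetTuples (N : ℕ) : Finset (ι → Finset ℕ) :=
  Fintype.piFinset fun i => powersetCard (s i) (range N)

theorem card_subsetTuples (N : ℕ) : #(subsetTuples s N) = ∏ i, N.choose (s i) := by
  simp [subsetTuples, Fintype.card_piFinset]

open scoped Classical in
theorem card_filter_not_pairwise_disjoint_le {N : ℕ} (hN : ∑ i, s i - 1 ≤ N) :
    #{K ∈ subsetTuples s N | ¬ Pairwise (Disjoint on K)} ≤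
      N.choose (∑ i, s i - 1) * ∏ i, (∑ i, s i - 1).choose (s i) := by
  set L := ∑ i, s i
  have hcover : {K ∈ subsetTuples s N | ¬ Pairwise (Disjoint on K)} ⊆
      (powersetCard (L - 1) (range N)).biUnion
        fun V => Fintype.piFinset fun i => powersetCard (s i) V := by
    intro K hK
    obtain ⟨hKN, hK⟩ := mem_filter.1 hK
    simp only [subsetTuples, Fintype.mem_piFinset, mem_powersetCard] at hKN
    have hcard : #(univ.biUnion K) ≤ L - 1 := by
      have := card_biUnion_lt_sum_card hK
      simp only [hKN, L] at this ⊢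
      omega
    obtain ⟨V, hKV, hVN, hV⟩ := exists_subsuperset_card_eq
      (biUnion_subset.2 fun i _ => (hKN i).1) hcard (by simpa using hN)
    refine mem_biUnion.2 ⟨V, mem_powersetCard.2 ⟨hVN, hV⟩, Fintype.mem_piFinset.2 fun i => ?_⟩
    exact mem_powersetCard.2 ⟨(subset_biUnion_of_mem K (mem_univ i)).trans hKV, (hKN i).2⟩
  calc _ ≤ ∑ V ∈ powersetCard (L - 1) (range N),
          #(Fintype.piFinset fun i => powersetCard (s i) V) :=
        (card_le_card hcover).trans card_biUnion_le
    _ = ∑ V ∈ powersetCard (L - 1) (range N), ∏ i, (L - 1).choose (s i) := by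
        refine sum_congr rfl fun V hV => ?_
        simp [Fintype.card_piFinset, (mem_powersetCard.1 hV).2]
    _ = _ := by simp

open scoped Classical in
theorem tendsto_card_filter_not_pairwise_disjoint_div :
    Tendsto (fun N => (#{K ∈ subsetTuples s N | ¬ Pairwise (Disjoint on K)} : ℝ) /
      #(subsetTuples s N)) atTop (𝓝 0) := by
  rcases Nat.eq_zero_or_pos (∑ i, s i) with hs | hs
  · refine tendsto_const_nhds.congr fun N => ?_
    rw [filter_false_of_mem, card_empty, Nat.cast_zero, zero_div]
    intro K hK
    rw [not_not]
    intro i j _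
    simp only [subsetTuples, Fintype.mem_piFinset, mem_powersetCard] at hK
    rw [sum_eq_zero_iff] at hs
    simp [onFun, card_eq_zero.1 ((hK i).2.trans (hs i (mem_univ i)))]
  set D := ∏ i, (∑ i, s i - 1).choose (s i)
  refine squeeze_zero' (Eventually.of_forall fun N => by positivity)
    ((eventually_ge_atTop (∑ i, s i)).mono fun N hN => ?_)
    (by simpa using (tendsto_choose_div_prod_choose s hs).const_mul (D : ℝ))
  have hpos : (0 : ℝ) < ∏ i, (N.choose (s i) : ℝ) := prod_pos fun i _ => Nat.cast_pos.2
    (Nat.choose_pos ((single_le_sum (fun _ _ => Nat.zero_le _) (mem_univ i)).trans hN))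
  rw [card_subsetTuples, Nat.cast_prod, mul_div_assoc', div_le_div_iff_of_pos_right hpos]
  exact_mod_cast (card_filter_not_pairwise_disjoint_le s (by omega)).trans_eq (mul_comm _ _)

variable {s}

theorem card_of_mem_subsetTuples {N : ℕ} {K : ι → Finset ℕ} (hK : K ∈ subsetTuples s N)
    (i : ι) : #(K i) = s i :=
  (mem_powersetCard.1 (Fintype.mem_piFinset.1 hK i)).2

theorem subsetTuples_nonempty {N : ℕ} (hN : ∑ i, s i ≤ N) : (subsetTuples s N).Nonempty :=
  Fintype.piFinset_nonempty.2 fun i => powersetCard_nonempty.2 <| by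
    simpa using (single_le_sum (fun _ _ => Nat.zero_le _) (mem_univ i)).trans hN

end SubsetTuples

theorem Equiv.Perm.exists_finite_support_extending_pair {α β : Type*} [Finite α] (f g : α → β)
    (hf : Injective f) (hg : Injective g) :
    ∃ τ : Equiv.Perm β, {x | τ x ≠ x}.Finite ∧ ∀ a, τ (f a) = g a := by
  classical
  have hU := (Set.finite_range f).union (Set.finite_range g)
  have := hU.to_subtype
  obtain ⟨σ, hσ⟩ := Equiv.Perm.exists_extending_pair
    (fun a => (⟨f a, .inl ⟨a, rfl⟩⟩ : ↥(Set.range f ∪ Set.range g)))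
    (fun a => ⟨g a, .inr ⟨a, rfl⟩⟩) (fun a b h => hf (congrArg Subtype.val h))
    (fun a b h => hg (congrArg Subtype.val h))
  refine ⟨Equiv.Perm.ofSubtype σ, hU.subset fun x hx => ?_, fun a => ?_⟩
  · by_contra hxU
    exact hx (Equiv.Perm.ofSubtype_apply_of_not_mem σ hxU)
  · rw [Equiv.Perm.ofSubtype_apply_of_mem σ (.inl ⟨a, rfl⟩), hσ]

theorem exists_perm_image_eq_of_pairwise_disjoint {ι α : Type*} [Finite ι] [DecidableEq α]
    {A B : ι → Finset α} (hA : Pairwise (Disjoint on A)) (hB : Pairwise (Disjoint on B))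
    (hAB : ∀ i, #(A i) = #(B i)) :
    ∃ τ : Equiv.Perm α, {x | τ x ≠ x}.Finite ∧ ∀ i, (A i).image τ = B i := by
  have e : ∀ i, A i ≃ B i := fun i => Fintype.equivOfCardEq (by simpa using hAB i)
  have hf : Injective fun x : Σ i, A i => (x.2 : α) := by
    rintro ⟨i, x, hx⟩ ⟨j, y, hy⟩ hxy
    obtain rfl : x = y := hxy
    obtain rfl : i = j := by_contra fun hij => disjoint_left.1 (hA hij) hx hy
    rfl
  have hg : Injective fun x : Σ i, A i => (e x.1 x.2 : α) := by
    rintro ⟨i, x⟩ ⟨j, y⟩ hxy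
    obtain rfl : i = j := by_contra fun hij =>
      disjoint_left.1 (hB hij) (e i x).2 ((congrArg (· ∈ B j) hxy).mpr (e j y).2)
    obtain rfl : x = y := (e i).injective (Subtype.ext hxy)
    rfl
  obtain ⟨τ, hfin, hτ⟩ := Equiv.Perm.exists_finite_support_extending_pair _ _ hf hg
  refine ⟨τ, hfin, fun i => ext fun y => ⟨?_, fun hy => ?_⟩⟩
  · intro hy
    obtain ⟨x, hx, rfl⟩ := mem_image.1 hy
    exact (hτ ⟨i, x, hx⟩).symm ▸ (e i _).2
  · obtain ⟨x, hx⟩ := (e i).surjective ⟨y, hy⟩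
    exact mem_image.2 ⟨x, x.2, (hτ ⟨i, x⟩).trans (congrArg Subtype.val hx)⟩

section UniformIntegrability

variable {α ι : Type*} {m : MeasurableSpace α} {μ : Measure α}

theorem uniformIntegrable_of_integral_tail_le [IsFiniteMeasure μ] {f : ι → α → ℝ}
    (hf : ∀ i, Integrable (f i) μ) {β : ℝ → ℝ} (hβ : Tendsto β atTop (𝓝 0))
    (htail : ∀ i, ∀ M, 0 ≤ M → ∫ x, max (|f i x| - M) 0 ∂μ ≤ β M) :
    UniformIntegrable f 1 μ := by
  refine uniformIntegrable_of le_rfl ENNReal.one_ne_top (fun i => (hf i).1) fun ε hε => ?_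
  obtain ⟨M, hM, hβM⟩ := ((eventually_ge_atTop 0).and
    (hβ.eventually (gt_mem_nhds (half_pos hε)))).exists
  refine ⟨(2 * M).toNNReal, fun i => ?_⟩
  have htail_int : Integrable (fun x => 2 * max (|f i x| - M) 0) μ :=
    (((hf i).abs.sub (integrable_const M)).sup (integrable_const 0)).const_mul 2
  calc eLpNorm ({x | (2 * M).toNNReal ≤ ‖f i x‖₊}.indicator (f i)) 1 μ
      ≤ eLpNorm (fun x => 2 * max (|f i x| - M) 0) 1 μ := by
        refine eLpNorm_mono_real fun x => ?_
        by_cases hx : x ∈ {x | (2 * M).toNNReal ≤ ‖f i x‖₊}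
        · have : 2 * M ≤ |f i x| := by simpa [← NNReal.coe_le_coe, hM] using hx
          rw [Set.indicator_of_mem hx, Real.norm_eq_abs]
          linarith [le_max_left (|f i x| - M) 0]
        · rw [Set.indicator_of_notMem hx, norm_zero]
          positivity
    _ = ENNReal.ofReal (∫ x, 2 * max (|f i x| - M) 0 ∂μ) := by
        rw [eLpNorm_one_eq_lintegral_enorm, ofReal_integral_eq_lintegral_ofReal htail_int
          (Eventually.of_forall fun x => by positivity)]
        exact lintegral_congr fun x => Real.enorm_of_nonneg (by positivity)
    _ ≤ ENNReal.ofReal ε := by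
        rw [integral_const_mul]
        exact ENNReal.ofReal_le_ofReal (by linarith [htail i M hM])

theorem MeasureTheory.UniformIntegrable.tendsto_integral_of_ae_tendsto [IsFiniteMeasure μ]
    {f : ℕ → α → ℝ} {g : α → ℝ} (hf : UniformIntegrable f 1 μ)
    (hfg : ∀ᵐ x ∂μ, Tendsto (fun n => f n x) atTop (𝓝 (g x))) :
    Tendsto (fun n => ∫ x, f n x ∂μ) atTop (𝓝 (∫ x, g x ∂μ)) := by
  have hg := hf.memLp_of_ae_tendsto hfg
  exact tendsto_integral_of_L1' g hg.1
    (Eventually.of_forall fun n => memLp_one_iff_integrable.1 (hf.memLp n))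
    (tendsto_Lp_finite_of_tendsto_ae le_rfl ENNReal.one_ne_top (fun n => hf.1 n) hg
      hf.unifIntegrable hfg)

theorem integrable_finset_expect {κ : Type*} (t : Finset κ) {f : κ → α → ℝ}
    (hf : ∀ i ∈ t, Integrable (f i) μ) : Integrable (fun x => 𝔼 i ∈ t, f i x) μ := by
  simp only [expect_eq_sum_div_card]
  exact (integrable_finsetSum t hf).div_const _

theorem integral_finset_expect {κ : Type*} (t : Finset κ) {f : κ → α → ℝ}
    (hf : ∀ i ∈ t, Integrable (f i) μ) : ∫ x, 𝔼 i ∈ t, f i x ∂μ = 𝔼 i ∈ t, ∫ x, f i x ∂μ := by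
  simp only [expect_eq_sum_div_card]
  rw [integral_div, integral_finsetSum t hf]

theorem tendsto_integral_max_sub_zero {f : α → ℝ} (hf : Integrable f μ) :
    Tendsto (fun M : ℝ => ∫ x, max (f x - M) 0 ∂μ) atTop (𝓝 0) := by
  have hlim : ∀ x, Tendsto (fun M : ℝ => max (f x - M) 0) atTop (𝓝 0) := fun x =>
    tendsto_const_nhds.congr' ((eventually_ge_atTop (f x)).mono fun M hM =>
      (max_eq_right (by linarith)).symm)
  simpa using tendsto_integral_filter_of_dominated_convergence
    (F := fun M x => max (f x - M) 0) (fun x => |f x|)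
    (Eventually.of_forall fun M =>
      (hf.1.sub aestronglyMeasurable_const).sup aestronglyMeasurable_const)
    ((eventually_ge_atTop 0).mono fun M hM => Eventually.of_forall fun x => by
      rw [Real.norm_eq_abs, abs_of_nonneg (le_max_right _ _)]
      exact max_le (by linarith [le_abs_self (f x)]) (abs_nonneg _))
    hf.abs (Eventually.of_forall hlim)

end UniformIntegrability

/-- The entry `X_A` of the array, read as `0` when `A ∉ 𝒥`. -/
def arrayEntry {k : ℕ} (ω : Idx k → ℝ) (A : Finset ℕ) : ℝ :=
  if h : A.Nonempty ∧ #A ≤ k then ω ⟨A, h⟩ else 0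

section ArrayEntry

variable {k : ℕ}

theorem arrayEntry_val (ω : Idx k → ℝ) (J : Idx k) : arrayEntry ω J.1 = ω J :=
  dif_pos J.2

theorem arrayEntry_permAct (τ : Equiv.Perm ℕ) (ω : Idx k → ℝ) (A : Finset ℕ) :
    arrayEntry (permAct k ℝ τ ω) A = arrayEntry ω (A.image τ) := by
  have hvalid : ((A.image τ).Nonempty ∧ #(A.image τ) ≤ k) ↔ (A.Nonempty ∧ #A ≤ k) := by
    rw [image_nonempty, card_image_of_injective _ τ.injective]
  unfold arrayEntry
  by_cases hA : A.Nonempty ∧ #A ≤ k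
  · rw [dif_pos hA, dif_pos (hvalid.2 hA)]
    rfl
  · rw [dif_neg hA, dif_neg (mt hvalid.1 hA)]

theorem measurable_arrayEntry (A : Finset ℕ) :
    Measurable fun ω : Idx k → ℝ => arrayEntry ω A := by
  unfold arrayEntry
  split_ifs
  exacts [measurable_pi_apply _, measurable_const]

theorem measurable_permAct (V : Type*) [MeasurableSpace V] (τ : Equiv.Perm ℕ) :
    Measurable (permAct k V τ) :=
  measurable_pi_lambda _ fun _ => measurable_pi_apply _

theorem TNstat_eq_expect (d : ℕ) (hd : 0 < d) (hdk : d ≤ k) (N : ℕ) (ω : Idx k → ℝ) :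
    TNstat k d hd hdk N ω = 𝔼 J ∈ powersetCard d (range N), arrayEntry ω J := by
  rw [TNstat, expect_eq_sum_div_card, card_powersetCard, card_range, inv_mul_eq_div,
    ← sum_attach (powersetCard d (range N)) (arrayEntry ω)]
  exact congrArg (· / _) (sum_congr rfl fun J _ => (arrayEntry_val ω _).symm)

end ArrayEntry

namespace IsExchangeable

open ProbabilityTheory

variable {k : ℕ} {P : Measure (Idx k → ℝ)}

theorem identDistrib_arrayEntry_family (hP : IsExchangeable k P) {ι : Type*} [Finite ι]
    {A B : ι → Finset ℕ} (hA : Pairwise (Disjoint on A)) (hB : Pairwise (Disjoint on B))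
    (hAB : ∀ i, #(A i) = #(B i)) :
    IdentDistrib (fun ω i => arrayEntry ω (A i)) (fun ω i => arrayEntry ω (B i)) P P := by
  obtain ⟨τ, hfin, hτ⟩ := exists_perm_image_eq_of_pairwise_disjoint hB hA fun i => (hAB i).symm
  have hmeas : ∀ C : ι → Finset ℕ, Measurable fun (ω : Idx k → ℝ) i => arrayEntry ω (C i) :=
    fun C => measurable_pi_lambda _ fun i => measurable_arrayEntry (C i)
  have hcomp : (fun ω i => arrayEntry ω (A i)) =
      (fun ω i => arrayEntry ω (B i)) ∘ permAct k ℝ τ := by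
    ext ω i
    simp only [comp_apply, arrayEntry_permAct, hτ]
  refine ⟨(hmeas A).aemeasurable, (hmeas B).aemeasurable, ?_⟩
  rw [hcomp, ← Measure.map_map (hmeas B) (measurable_permAct ℝ τ), hP τ hfin]

theorem identDistrib_arrayEntry (hP : IsExchangeable k P) {A B : Finset ℕ} (hAB : #A = #B) :
    IdentDistrib (fun ω => arrayEntry ω A) (fun ω => arrayEntry ω B) P P :=
  (hP.identDistrib_arrayEntry_family (ι := Unit) (Subsingleton.pairwise)
    Subsingleton.pairwise fun _ => hAB).comp (measurable_pi_apply ())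

theorem integrable_pow_arrayEntry (hP : IsExchangeable k P) (n : ℕ) {A B : Finset ℕ}
    (hAB : #A = #B) (hB : Integrable (fun ω => |arrayEntry ω B| ^ n) P) :
    Integrable (fun ω => |arrayEntry ω A| ^ n) P :=
  ((hP.identDistrib_arrayEntry hAB).comp (continuous_abs.pow n).measurable).integrable_iff.2 hB

end IsExchangeable

def tupleStat (k : ℕ) {ι : Type*} [Fintype ι] [DecidableEq ι] (s : ι → ℕ) (N : ℕ)
    (ω : Idx k → ℝ) : ℝ :=
  𝔼 K ∈ subsetTuples s N, ∏ i, arrayEntry ω (K i)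

section TupleStat

variable {k : ℕ} {ι : Type*} [Fintype ι] {s : ι → ℕ}

theorem abs_prod_arrayEntry_le [Nonempty ι] (ω : Idx k → ℝ) (K : ι → Finset ℕ) :
    |∏ i, arrayEntry ω (K i)| ≤ 𝔼 i, |arrayEntry ω (K i)| ^ Fintype.card ι := by
  rw [abs_prod]
  exact prod_abs_le_expect_pow _

section

variable [DecidableEq ι]

theorem prod_expect_arrayEntry_eq_tupleStat (s : ι → ℕ) (N : ℕ) (ω : Idx k → ℝ) :
    ∏ i, 𝔼 J ∈ powersetCard (s i) (range N), arrayEntry ω J = tupleStat k s N ω :=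
  prod_expect_eq_expect_piFinset _ _

variable [Nonempty ι]

theorem abs_tupleStat_le (N : ℕ) (ω : Idx k → ℝ) :
    |tupleStat k s N ω| ≤
      𝔼 K ∈ subsetTuples s N, 𝔼 i, |arrayEntry ω (K i)| ^ Fintype.card ι :=
  (abs_expect_le _ _).trans (expect_le_expect fun K _ => abs_prod_arrayEntry_le ω K)

theorem max_abs_tupleStat_sub_le {M : ℝ} (hM : 0 ≤ M) (N : ℕ) (ω : Idx k → ℝ) :
    max (|tupleStat k s N ω| - M) 0 ≤
      𝔼 K ∈ subsetTuples s N, 𝔼 i, max (|arrayEntry ω (K i)| ^ Fintype.card ι - M) 0 := by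
  refine (max_abs_sub_le_expect hM (abs_tupleStat_le N ω)).trans
    (expect_le_expect fun K _ => ?_)
  have hY : 0 ≤ 𝔼 i, |arrayEntry ω (K i)| ^ Fintype.card ι :=
    expect_nonneg fun i _ => by positivity
  simpa only [abs_of_nonneg hY] using max_abs_sub_le_expect hM (abs_of_nonneg hY).le

end

variable {P : Measure (Idx k → ℝ)} (hP : IsExchangeable k P) [Nonempty ι]
  (hq : ∀ i, Integrable (fun ω => |arrayEntry ω (range (s i))| ^ Fintype.card ι) P)
include hP hq

theorem integrable_prod_arrayEntry {K : ι → Finset ℕ} (hK : ∀ i, #(K i) = s i) :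
    Integrable (fun ω => ∏ i, arrayEntry ω (K i)) P :=
  (integrable_finset_expect _ fun i _ => hP.integrable_pow_arrayEntry _
      ((hK i).trans (card_range _).symm) (hq i)).mono'
    (Finset.measurable_prod _ fun _ _ => measurable_arrayEntry _).aestronglyMeasurable
    (Eventually.of_forall fun ω => abs_prod_arrayEntry_le ω K)

theorem abs_integral_prod_arrayEntry_le {K : ι → Finset ℕ} (hK : ∀ i, #(K i) = s i) :
    |∫ ω, ∏ i, arrayEntry ω (K i) ∂P| ≤
      𝔼 i, ∫ ω, |arrayEntry ω (range (s i))| ^ Fintype.card ι ∂P := by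
  have hint : ∀ i ∈ univ, Integrable (fun ω => |arrayEntry ω (K i)| ^ Fintype.card ι) P :=
    fun i _ => hP.integrable_pow_arrayEntry _ ((hK i).trans (card_range _).symm) (hq i)
  calc |∫ ω, ∏ i, arrayEntry ω (K i) ∂P|
      ≤ ∫ ω, 𝔼 i, |arrayEntry ω (K i)| ^ Fintype.card ι ∂P :=
        abs_integral_le_integral_abs.trans <| integral_mono
          (integrable_prod_arrayEntry hP hq hK).abs (integrable_finset_expect _ hint)
          fun ω => abs_prod_arrayEntry_le ω K
    _ = _ := by
        rw [integral_finset_expect _ hint]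
        exact expect_congr rfl fun i _ =>
          ((hP.identDistrib_arrayEntry ((hK i).trans (card_range _).symm)).comp
            (continuous_abs.pow _).measurable).integral_eq

variable [DecidableEq ι]

theorem integrable_tupleStat (N : ℕ) : Integrable (tupleStat k s N) P :=
  integrable_finset_expect _ fun _ hK =>
    integrable_prod_arrayEntry hP hq (card_of_mem_subsetTuples hK)

theorem tendsto_integral_tupleStat {J : ι → Finset ℕ} (hJ : Pairwise (Disjoint on J))
    (hJs : ∀ i, #(J i) = s i) :
    Tendsto (fun N => ∫ ω, tupleStat k s N ω ∂P) atTop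
      (𝓝 (∫ ω, ∏ i, arrayEntry ω (J i) ∂P)) := by
  classical
  set R := ∫ ω, ∏ i, arrayEntry ω (J i) ∂P
  set B := 𝔼 i, ∫ ω, |arrayEntry ω (range (s i))| ^ Fintype.card ι ∂P + |R|
  have hdisj : ∀ N, ∀ K ∈ subsetTuples s N, Pairwise (Disjoint on K) →
      ∫ ω, ∏ i, arrayEntry ω (K i) ∂P = R := fun N K hK hKdisj =>
    ((hP.identDistrib_arrayEntry_family hKdisj hJ fun i =>
      (card_of_mem_subsetTuples hK i).trans (hJs i).symm).comp
        (by fun_prop : Measurable fun x : ι → ℝ => ∏ i, x i)).integral_eq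
  have hbound : ∀ N, ∀ K ∈ subsetTuples s N, |∫ ω, ∏ i, arrayEntry ω (K i) ∂P - R| ≤ B :=
    fun N K hK => (abs_sub _ _).trans (add_le_add_left
      (abs_integral_prod_arrayEntry_le hP hq (card_of_mem_subsetTuples hK)) _)
  rw [tendsto_iff_norm_sub_tendsto_zero]
  refine squeeze_zero' (Eventually.of_forall fun N => norm_nonneg _)
    ((eventually_ge_atTop (∑ i, s i)).mono fun N hN => ?_)
    (by simpa using (tendsto_card_filter_not_pairwise_disjoint_div s).mul_const B)
  unfold tupleStat
  rw [Real.norm_eq_abs, integral_finset_expect _ fun K hK =>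
    integrable_prod_arrayEntry hP hq (card_of_mem_subsetTuples hK)]
  exact abs_expect_sub_le (subsetTuples_nonempty hN) _ (hdisj N) (hbound N)

theorem integral_tail_tupleStat_le [IsFiniteMeasure P] {M : ℝ} (hM : 0 ≤ M) (N : ℕ) :
    ∫ ω, max (|tupleStat k s N ω| - M) 0 ∂P ≤
      𝔼 i, ∫ ω, max (|arrayEntry ω (range (s i))| ^ Fintype.card ι - M) 0 ∂P := by
  have htail_int : ∀ A : Finset ℕ, ∀ i, #A = s i →
      Integrable (fun ω => max (|arrayEntry ω A| ^ Fintype.card ι - M) 0) P := fun A i hA =>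
    ((hP.integrable_pow_arrayEntry _ (hA.trans (card_range _).symm) (hq i)).sub
      (integrable_const M)).sup (integrable_const 0)
  have hK_int : ∀ K ∈ subsetTuples s N, Integrable (fun ω =>
      𝔼 i, max (|arrayEntry ω (K i)| ^ Fintype.card ι - M) 0) P := fun K hK =>
    integrable_finset_expect _ fun i _ => htail_int _ i (card_of_mem_subsetTuples hK i)
  calc ∫ ω, max (|tupleStat k s N ω| - M) 0 ∂P
      ≤ ∫ ω, 𝔼 K ∈ subsetTuples s N, 𝔼 i,
          max (|arrayEntry ω (K i)| ^ Fintype.card ι - M) 0 ∂P :=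
        integral_mono (((integrable_tupleStat hP hq N).abs.sub (integrable_const M)).sup
          (integrable_const 0)) (integrable_finset_expect _ hK_int)
          fun ω => max_abs_tupleStat_sub_le hM N ω
    _ = 𝔼 K ∈ subsetTuples s N,
          𝔼 i, ∫ ω, max (|arrayEntry ω (range (s i))| ^ Fintype.card ι - M) 0 ∂P := by
        rw [integral_finset_expect _ hK_int]
        refine expect_congr rfl fun K hK => ?_
        rw [integral_finset_expect _ fun i _ => htail_int _ i (card_of_mem_subsetTuples hK i)]
        exact expect_congr rfl fun i _ =>
          ((hP.identDistrib_arrayEntry ((card_of_mem_subsetTuples hK i).trans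
            (card_range _).symm)).comp (by fun_prop : Measurable fun x : ℝ =>
              max (|x| ^ Fintype.card ι - M) 0)).integral_eq
    _ ≤ _ := by
        rcases (subsetTuples s N).eq_empty_or_nonempty with h | h
        · rw [h, expect_empty]
          exact expect_nonneg fun i _ => integral_nonneg fun ω => le_max_right _ _
        · rw [expect_const h]

theorem uniformIntegrable_tupleStat [IsFiniteMeasure P] :
    UniformIntegrable (fun N => tupleStat k s N) 1 P := by
  refine uniformIntegrable_of_integral_tail_le (integrable_tupleStat hP hq) ?_
    fun N M hM => integral_tail_tupleStat_le hP hq hM N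
  simp only [Fintype.expect_eq_sum_div_card]
  simpa using (tendsto_finsetSum _ fun i _ => tendsto_integral_max_sub_zero (hq i)).div_const
    (Fintype.card ι : ℝ)

end TupleStat

theorem statement5_general (k l : ℕ)
    (P : Measure (Idx k → ℝ)) [IsProbabilityMeasure P] (hP : IsExchangeable k P)
    (ks : Fin l → ℕ) (hks : ∀ j, 0 < ks j ∧ ks j ≤ k) (hdec : StrictAnti ks)
    (h : Fin l → ℕ)
    (p : ℕ) (hp : p = ∑ j, h j)
    (Js : Fin p → Idx k)
    (hdisj : ∀ m m', m ≠ m' → Disjoint (Js m).1 (Js m').1)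
    (hcount : ∀ j, (Finset.univ.filter (fun m => (Js m).1.card = ks j)).card = h j)
    (hint : ∀ j, Integrable
      (fun ω => |ω (idxRange k (ks j) (hks j).1 (hks j).2)| ^ p) P)
    (T : Fin l → (Idx k → ℝ) → ℝ)
    (hT : ∀ j, ∀ᵐ ω ∂P,
      Tendsto (fun N => TNstat k (ks j) (hks j).1 (hks j).2 N ω) atTop (𝓝 (T j ω))) :
    ∫ ω, ∏ j, (T j ω) ^ (h j) ∂P = ∫ ω, ∏ m, ω (Js m) ∂P := by
  rcases Nat.eq_zero_or_pos p with rfl | hp0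
  · simp [sum_eq_zero_iff.1 hp.symm]
  have : Nonempty (Fin p) := ⟨⟨0, hp0⟩⟩
  set s : Fin p → ℕ := fun m => #(Js m).1
  choose c hc using exists_eq_of_sum_card_filter_eq hdec.injective (f := s)
    (by simp only [s, hcount, Fintype.card_fin, hp])
  have hfiber : ∀ j, #{m | c m = j} = h j := fun j => by
    rw [← hcount j]
    congr 1
    ext m
    simp only [mem_filter, mem_univ, true_and]
    exact ⟨fun hm => hm ▸ hc m, fun hm => hdec.injective ((hc m).symm.trans hm)⟩
  have hstat : ∀ N ω, ∏ j, TNstat k (ks j) (hks j).1 (hks j).2 N ω ^ h j = tupleStat k s N ω := by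
    intro N ω
    simp only [← hfiber, prod_pow_card_filter_eq_prod_comp, TNstat_eq_expect, ← hc]
    exact prod_expect_arrayEntry_eq_tupleStat s N ω
  have hlim : ∀ᵐ ω ∂P, Tendsto (fun N => tupleStat k s N ω) atTop (𝓝 (∏ j, T j ω ^ h j)) := by
    filter_upwards [ae_all_iff.2 hT] with ω hω
    simpa only [hstat] using tendsto_finsetProd univ fun j _ => (hω j).pow (h j)
  have hq : ∀ m, Integrable (fun ω => |arrayEntry ω (range (s m))| ^ Fintype.card (Fin p)) P := by
    intro m
    rw [Fintype.card_fin, hc m]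
    exact (hint (c m)).congr (Eventually.of_forall fun ω =>
      congrArg (|·| ^ p) (arrayEntry_val ω _).symm)
  refine tendsto_nhds_unique
    ((uniformIntegrable_tupleStat hP hq).tendsto_integral_of_ae_tendsto hlim) ?_
  simpa only [arrayEntry_val] using tendsto_integral_tupleStat hP hq hdisj fun m => rfl

/-- the joint moments of the limiting `U`-statistics `T^{(k_j)}` of an
exchangeable array are given by the joint moment of the entries of the array along any
partition `{J_m}` of `{0,…,L-1}` containing exactly `h_j` sets of size `k_j`:
`E[∏_j (T^{(k_j)})^{h_j}] = E[∏_m X_{J_m}]`. -/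
theorem statement5 (k l : ℕ)
    (P : Measure (Idx k → ℝ)) [IsProbabilityMeasure P] (hP : IsExchangeable k P)
    (ks : Fin l → ℕ) (hks : ∀ j, 0 < ks j ∧ ks j ≤ k) (hdec : StrictAnti ks)
    (h : Fin l → ℕ) (hh : ∀ j, 0 < h j)
    (L p : ℕ) (hL : L = ∑ j, h j * ks j) (hp : p = ∑ j, h j)
    (Js : Fin p → Idx k)
    (hdisj : ∀ m m', m ≠ m' → Disjoint (Js m).1 (Js m').1)
    (hcover : Finset.univ.sup (fun m => (Js m).1) = Finset.range L)
    (hcount : ∀ j, (Finset.univ.filter (fun m => (Js m).1.card = ks j)).card = h j)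
    (hint : ∀ j, Integrable
      (fun ω => |ω (idxRange k (ks j) (hks j).1 (hks j).2)| ^ p) P)
    (T : Fin l → (Idx k → ℝ) → ℝ)
    (hT : ∀ j, ∀ᵐ ω ∂P,
      Tendsto (fun N => TNstat k (ks j) (hks j).1 (hks j).2 N ω) atTop (𝓝 (T j ω))) :
    ∫ ω, ∏ j, (T j ω) ^ (h j) ∂P = ∫ ω, ∏ m, ω (Js m) ∂P :=
  statement5_general k l P hP ks hks hdec h p hp Js hdisj hcount hint T hT

end
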